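/- arXiv:1311.7092 — 2 statements merged into one kernel-verified Lean document; each statement's English description precedes it below -/
import Mathlib

section
/- In TLhat_3(q): F_2(f_{a_2}) = −((q+1)/q)·f_{a_3}f_{σ_2} − (q+1)·f_{σ_2}f_{a_3} + f_{σ_2} + f_{a_3}; moreover F_2(f_{a_2})·f_{σ_2}·F_2(f_{a_2}) = δ·F_2(f_{a_2}) and f_{σ_2}·F_2(f_{a_2})·f_{σ_2} = δ·f_{σ_2}. -/
namespace AffineTL

open FreeAlgebra

/-- Cyclic successor on `Fin m`. -/
def csucc {m : ℕ} (i : Fin m) : Fin m := ⟨(i.val + 1) % m, Nat.mod_lt _ i.pos⟩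

/-- The defining relations of the affine Temperley–Lieb algebra `TLhat_m(q)` with `m`
generators (indexed so that `g_{σ_i}` has index `i - 1` and `g_{a_m}` has index `m - 1`).
For `m = 1` the unique generator is set to `0`, so that `TLhat_1(q) ≅ K`. -/
inductive ATLRel {K : Type*} [CommRing K] (q : K) (m : ℕ) :
    FreeAlgebra K (Fin m) → FreeAlgebra K (Fin m) → Prop
  | degen (h : m ≤ 1) (i : Fin m) : ATLRel q m (ι K i) 0
  | quad (h : 2 ≤ m) (i : Fin m) :
      ATLRel q m (ι K i * ι K i) ((q - 1) • ι K i + algebraMap K _ q)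
  | comm (h : 3 ≤ m) (i j : Fin m) (h1 : i ≠ j) (h2 : j ≠ csucc i) (h3 : i ≠ csucc j) :
      ATLRel q m (ι K i * ι K j) (ι K j * ι K i)
  | braid (h : 3 ≤ m) (i : Fin m) :
      ATLRel q m (ι K i * ι K (csucc i) * ι K i) (ι K (csucc i) * ι K i * ι K (csucc i))
  | vrel (h : 3 ≤ m) (i : Fin m) :
      ATLRel q m (ι K i * ι K (csucc i) * ι K i + ι K i * ι K (csucc i) + ι K (csucc i) * ι K i
        + ι K i + ι K (csucc i) + 1) 0

/-- The affine Temperley–Lieb algebra `TLhat_m(q)` of type `Ã`. -/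
abbrev ATL (K : Type*) [CommRing K] (q : K) (m : ℕ) : Type _ := RingQuot (ATLRel q m)

/-- The generators of `TLhat_m(q)`. -/
noncomputable def g {K : Type*} [CommRing K] (q : K) (m : ℕ) (i : Fin m) : ATL K q m :=
  RingQuot.mkAlgHom K (ATLRel q m) (ι K i)

/-- The defining relations of the type `A` Temperley–Lieb algebra `TL_n(q)` with `n`
generators (`g_{σ_i}` has index `i - 1`). -/
inductive TLARel {K : Type*} [CommRing K] (q : K) (n : ℕ) :
    FreeAlgebra K (Fin n) → FreeAlgebra K (Fin n) → Prop
  | quad (i : Fin n) :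
      TLARel q n (ι K i * ι K i) ((q - 1) • ι K i + algebraMap K _ q)
  | comm (i j : Fin n) (h : i.val + 2 ≤ j.val ∨ j.val + 2 ≤ i.val) :
      TLARel q n (ι K i * ι K j) (ι K j * ι K i)
  | braid (i j : Fin n) (h : j.val = i.val + 1) :
      TLARel q n (ι K i * ι K j * ι K i) (ι K j * ι K i * ι K j)
  | vrel (i j : Fin n) (h : j.val = i.val + 1) :
      TLARel q n (ι K i * ι K j * ι K i + ι K i * ι K j + ι K j * ι K i
        + ι K i + ι K j + 1) 0

/-- The type `A` Temperley–Lieb algebra `TL_n(q)`. -/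
abbrev TLA (K : Type*) [CommRing K] (q : K) (n : ℕ) : Type _ := RingQuot (TLARel q n)

/-- The generators of `TL_n(q)`. -/
noncomputable def gA {K : Type*} [CommRing K] (q : K) (n : ℕ) (i : Fin n) : TLA K q n :=
  RingQuot.mkAlgHom K (TLARel q n) (ι K i)

/-- The formal inverse `q⁻¹·(x − (q−1))` of an element satisfying `x² = (q−1)x + q`. -/
noncomputable def qinv {K : Type*} [CommRing K] (q : K) {A : Type*} [Ring A] [Algebra K A]
    (x : A) : A :=
  Ring.inverse q • (x - algebraMap K A (q - 1))

/-- A trace on a `K`-algebra: a `K`-linear form vanishing on commutators. -/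
def IsTrace {K : Type*} [CommRing K] {A : Type*} [Ring A] [Algebra K A]
    (τ : A →ₗ[K] K) : Prop :=
  ∀ x y : A, τ (x * y) = τ (y * x)

/-- The element `G = g_{σ_n}⋯g_{σ_1}·g_{a_{n+1}}` of `TLhat_{n+1}(q)`. -/
noncomputable def bigG {K : Type*} [CommRing K] (q : K) (n : ℕ) : ATL K q (n + 1) :=
  (List.ofFn fun j : Fin n => g q (n + 1) ⟨n - 1 - j.val, by omega⟩).prod *
    g q (n + 1) (Fin.last n)

/-- The inverse `G⁻¹ = g_{a_{n+1}}⁻¹·g_{σ_1}⁻¹⋯g_{σ_n}⁻¹` of `bigG`. -/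
noncomputable def bigGinv {K : Type*} [CommRing K] (q : K) (n : ℕ) : ATL K q (n + 1) :=
  qinv q (g q (n + 1) (Fin.last n)) *
    (List.ofFn fun j : Fin n => qinv q (g q (n + 1) j.castSucc)).prod

end AffineTL

namespace AffineTL

/-- The idempotent `f_x = (q+1)⁻¹(x+1)` attached to the generator with index `i` of
`TLhat_m(q)`. -/
noncomputable def fgen {K : Type*} [CommRing K] (q : K) (m : ℕ) (i : Fin m) : ATL K q m :=
  Ring.inverse (q + 1) • (g q m i + 1)

end AffineTL
section TLkey
variable {K : Type*} [CommRing K] {A : Type*} [Ring A] [Algebra K A]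

lemma tl_key (q : K) (e1 e2 : A)
    (h1 : e1 * e1 = (q + 1) • e1) (h2 : e2 * e2 = (q + 1) • e2)
    (h121 : e1 * e2 * e1 = q • e1) (h212 : e2 * e1 * e2 = q • e2) :
    (q • e1 + q • e2 - q • (e1 * e2) - e2 * e1) * e1 *
        (q • e1 + q • e2 - q • (e1 * e2) - e2 * e1) =
      (q * q) • (q • e1 + q • e2 - q • (e1 * e2) - e2 * e1) ∧
    e1 * (q • e1 + q • e2 - q • (e1 * e2) - e2 * e1) * e1 = (q * q) • e1 := by
  set E := q • e1 + q • e2 - q • (e1 * e2) - e2 * e1 with hE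
  have h211 : e2 * e1 * e1 = (q + 1) • (e2 * e1) := by
    rw [mul_assoc, h1, mul_smul_comm]
  have h112 : e1 * (e1 * e2) = (q + 1) • (e1 * e2) := by
    rw [← mul_assoc, h1, smul_mul_assoc]
  have h2112 : e2 * e1 * (e1 * e2) = (q * (q + 1)) • e2 := by
    rw [mul_assoc e2 e1, h112, mul_smul_comm, ← mul_assoc, h212, smul_smul, mul_comm]
  have h2121 : e2 * e1 * (e2 * e1) = q • (e2 * e1) := by
    rw [← mul_assoc, h212, smul_mul_assoc]
  have h1121 : e1 * (e2 * e1) = q • e1 := by rw [← mul_assoc, h121]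
  have hE1 : E * e1 = q • e1 - e2 * e1 := by
    rw [hE, sub_mul, sub_mul, add_mul, smul_mul_assoc, smul_mul_assoc, smul_mul_assoc,
      h1, h121, h211]
    module
  have goal2 : e1 * E * e1 = (q * q) • e1 := by
    rw [mul_assoc, hE1, mul_sub, mul_smul_comm, h1, h1121]
    module
  refine ⟨?_, goal2⟩
  rw [hE1, sub_mul, smul_mul_assoc]
  rw [hE, mul_sub, mul_sub, mul_add, mul_smul_comm, mul_smul_comm, mul_smul_comm,
    h1, h112, h1121]
  rw [mul_sub, mul_sub, mul_add, mul_smul_comm, mul_smul_comm, mul_smul_comm,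
    h211, h212, h2112, h2121]
  module

end TLkey

open AffineTL in
/-- the expression of `F_2(f_{a_2})` in the `f`-generators of `TLhat_3(q)`,
and the relations `F_2(f_{a_2})·f_{σ_2}·F_2(f_{a_2}) = δ·F_2(f_{a_2})` and
`f_{σ_2}·F_2(f_{a_2})·f_{σ_2} = δ·f_{σ_2}`, where `δ = q/(1+q)²`. -/
theorem statement18 {K : Type*} [CommRing K] [IsDomain K] [CharZero K]
    (q sq : K) (hsq : sq * sq = q) (hq : IsUnit q) (hq1 : IsUnit (q + 1))
    (F : ATL K q 2 →ₐ[K] ATL K q 3)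
    (hF1 : F (g q 2 0) = g q 3 0)
    (hF2 : F (g q 2 1) = g q 3 1 * g q 3 2 * qinv q (g q 3 1)) :
    F (fgen q 2 1) =
      (-((q + 1) * Ring.inverse q)) • (fgen q 3 2 * fgen q 3 1) -
        (q + 1) • (fgen q 3 1 * fgen q 3 2) + fgen q 3 1 + fgen q 3 2 ∧
    F (fgen q 2 1) * fgen q 3 1 * F (fgen q 2 1) =
      (q * Ring.inverse ((1 + q) ^ 2)) • F (fgen q 2 1) ∧
    fgen q 3 1 * F (fgen q 2 1) * fgen q 3 1 =
      (q * Ring.inverse ((1 + q) ^ 2)) • fgen q 3 1 := by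
  set x := g q 3 1 with hxdef
  set y := g q 3 2 with hydef
  set u := Ring.inverse q with hudef
  set v := Ring.inverse (q + 1) with hvdef
  set w := Ring.inverse ((1 + q) ^ 2) with hwdef
  have hqu : q * u = 1 := Ring.mul_inverse_cancel q hq
  have hq1u : (q + 1) * v = 1 := Ring.mul_inverse_cancel _ hq1
  have hq1' : IsUnit (1 + q) := by rwa [add_comm]
  have hw : (1 + q) ^ 2 * w = 1 := Ring.mul_inverse_cancel _ (hq1'.pow 2)
  -- cancellation by a unit scalar
  have cancel : ∀ c : K, IsUnit c → ∀ a b : ATL K q 3, c • a = c • b → a = b := by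
    intro c hc a b h
    calc a = ((↑hc.unit⁻¹ : K) * c) • a := by rw [IsUnit.val_inv_mul, one_smul]
      _ = (↑hc.unit⁻¹ : K) • (c • a) := by rw [mul_smul]
      _ = (↑hc.unit⁻¹ : K) • (c • b) := by rw [h]
      _ = b := by rw [← mul_smul, IsUnit.val_inv_mul, one_smul]
  -- defining relations
  have hcs : csucc (1 : Fin 3) = 2 := by decide
  have hx : x * x = (q - 1) • x + algebraMap K _ q := by
    have h := RingQuot.mkAlgHom_rel K (ATLRel.quad (q := q) (m := 3) (by norm_num) 1)
    simpa [hxdef, g, map_mul, map_add, map_smul] using h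
  have hy : y * y = (q - 1) • y + algebraMap K _ q := by
    have h := RingQuot.mkAlgHom_rel K (ATLRel.quad (q := q) (m := 3) (by norm_num) 2)
    simpa [hydef, g, map_mul, map_add, map_smul] using h
  have hb : x * y * x = y * x * y := by
    have h := RingQuot.mkAlgHom_rel K (ATLRel.braid (q := q) (m := 3) (by norm_num) 1)
    rw [hcs] at h
    simpa [hxdef, hydef, g, map_mul] using h
  have hv : x * y * x + x * y + y * x + x + y + 1 = 0 := by
    have h := RingQuot.mkAlgHom_rel K (ATLRel.vrel (q := q) (m := 3) (by norm_num) 1)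
    rw [hcs] at h
    simpa [hxdef, hydef, g, map_mul, map_add, map_one] using h
  have hxyx : x * y * x = -(x * y) - y * x - x - y - 1 := by
    have h : x * y * x + (x * y + y * x + x + y + 1) = 0 := by rw [← hv]; abel
    rw [eq_neg_of_add_eq_zero_left h]; abel
  -- the TL idempotent-style generators
  set e1 : ATL K q 3 := x + 1 with he1def
  set e2 : ATL K q 3 := y + 1 with he2def
  have he1 : e1 * e1 = (q + 1) • e1 := by
    rw [he1def]
    simp only [add_mul, mul_add, mul_one, one_mul]
    rw [hx, Algebra.algebraMap_eq_smul_one]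
    module
  have he2 : e2 * e2 = (q + 1) • e2 := by
    rw [he2def]
    simp only [add_mul, mul_add, mul_one, one_mul]
    rw [hy, Algebra.algebraMap_eq_smul_one]
    module
  have h121 : e1 * e2 * e1 = q • e1 := by
    rw [he1def, he2def]
    simp only [add_mul, mul_add, mul_one, one_mul]
    rw [hxyx, hx, Algebra.algebraMap_eq_smul_one]
    module
  have h212 : e2 * e1 * e2 = q • e2 := by
    rw [he1def, he2def]
    simp only [add_mul, mul_add, mul_one, one_mul]
    rw [← hb, hxyx, hy, Algebra.algebraMap_eq_smul_one]
    module
  -- the image of the idempotent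
  set P := F (fgen q 2 1) with hPdef
  have hFf : P = v • (x * y * (u • (x - algebraMap K _ (q - 1))) + 1) := by
    rw [hPdef]
    simp only [fgen, qinv, map_smul, map_add, map_one, hF2, hudef, hvdef]
  have hP : (q * (q + 1)) • P = q • e1 + q • e2 - q • (e1 * e2) - e2 * e1 := by
    rw [hFf, smul_smul, show q * (q + 1) * v = q by rw [mul_assoc, hq1u, mul_one],
      Algebra.algebraMap_eq_smul_one, mul_smul_comm, smul_add, smul_smul, hqu, one_smul,
      mul_sub, mul_smul_comm, mul_one, hxyx, he1def, he2def]
    simp only [mul_add, add_mul, mul_one, one_mul]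
    module
  have key := tl_key q e1 e2 he1 he2 h121 h212
  refine ⟨?_, ?_, ?_⟩
  · apply cancel (q * (q + 1)) (hq.mul hq1)
    rw [hP]
    simp only [fgen, ← hxdef, ← hydef, ← hvdef, ← hudef, ← he1def, ← he2def]
    rw [smul_mul_smul_comm, smul_mul_smul_comm]
    match_scalars
    · linear_combination (-q) * hq1u
    · linear_combination (-2 * q) * hq1u
    · linear_combination (-q) * hq1u
    · linear_combination (q * ((q + 1) * v + 1)) * hq1u
    · linear_combination ((q + 1) ^ 2 * v ^ 2) * hqu + ((q + 1) * v + 1) * hq1u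
  · apply cancel ((q * (q + 1)) * (q * (q + 1)) * (q + 1)) (((hq.mul hq1).mul (hq.mul hq1)).mul hq1)
    have lhs1 : P * fgen q 3 1 * P = v • (P * e1 * P) := by
      simp only [fgen, ← hxdef, ← hvdef, ← he1def]
      rw [mul_smul_comm, smul_mul_assoc]
    rw [lhs1, smul_smul,
      show q * (q + 1) * (q * (q + 1)) * (q + 1) * v = q * (q + 1) * (q * (q + 1)) by
        rw [mul_assoc, hq1u, mul_one]]
    have expand : (q * (q + 1) * (q * (q + 1))) • (P * e1 * P)
        = ((q * (q + 1)) • P) * e1 * ((q * (q + 1)) • P) := by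
      rw [smul_mul_assoc, smul_mul_assoc, mul_smul_comm, smul_smul]
    rw [expand, hP, key.1, smul_smul, ← hP, smul_smul]
    congr 1
    linear_combination (-(q ^ 3 * (q + 1))) * hw
  · apply cancel ((q * (q + 1)) * (q + 1) * (q + 1)) (((hq.mul hq1).mul hq1).mul hq1)
    have lhs1 : fgen q 3 1 * P * fgen q 3 1 = (v * v) • (e1 * P * e1) := by
      simp only [fgen, ← hxdef, ← hvdef, ← he1def]
      rw [smul_mul_assoc, smul_mul_assoc, mul_smul_comm, smul_smul]
    have rhs1 : fgen q 3 1 = v • e1 := by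
      simp only [fgen, ← hxdef, ← hvdef, ← he1def]
    rw [lhs1, rhs1, smul_smul,
      show q * (q + 1) * (q + 1) * (q + 1) * (v * v) = q * (q + 1) by
        rw [show q * (q + 1) * (q + 1) * (q + 1) * (v * v)
            = (q * (q + 1)) * (((q + 1) * v) * ((q + 1) * v)) by ring, hq1u, mul_one, mul_one]]
    have expand : (q * (q + 1)) • (e1 * P * e1) = e1 * ((q * (q + 1)) • P) * e1 := by
      rw [mul_smul_comm, smul_mul_assoc]
    rw [expand, hP, key.2, smul_smul, smul_smul]
    congr 1
    linear_combination (-(q ^ 2 * (q + 1) * v)) * hw + (-(q ^ 2)) * hq1u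
end

section
/- In TLhat_3(q), for i ≥ 1 define x_i := (−1)^i·((q+1)/q)^i·(f_{σ_1}f_{a_3}f_{σ_2})^i + (−1)^i·(q+1)^i·(f_{σ_1}f_{σ_2}f_{a_3})^i + (−1)^{i−1}·((q+1)/q)^{i−1}·(f_{σ_1}f_{a_3}f_{σ_2})^{i−1}·f_{σ_1}f_{a_3} + (−1)^{i−1}·(q+1)^{i−1}·(f_{σ_1}f_{σ_2}f_{a_3})^{i−1}·f_{σ_1}f_{σ_2}. Then: x_1 = f_{σ_1}·F_2(f_{a_2}); x_1^2 = 3δ·x_1 + x_2; x_1·x_i = δ^2·x_{i−1} + 2δ·x_i + x_{i+1} for every i ≥ 2; and consequently x_1·x_j = x_j·x_1 for every j ≥ 1. -/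
namespace AffineTL

/-- The element `x_i` of `TLhat_3(q)` (indices `0, 1, 2` are `σ_1, σ_2, a_3`):
`x_i = (−1)^i((q+1)/q)^i (f_{σ_1}f_{a_3}f_{σ_2})^i + (−1)^i(q+1)^i (f_{σ_1}f_{σ_2}f_{a_3})^i
+ (−1)^{i−1}((q+1)/q)^{i−1}(f_{σ_1}f_{a_3}f_{σ_2})^{i−1}f_{σ_1}f_{a_3}
+ (−1)^{i−1}(q+1)^{i−1}(f_{σ_1}f_{σ_2}f_{a_3})^{i−1}f_{σ_1}f_{σ_2}`. -/
noncomputable def xElt {K : Type*} [CommRing K] (q : K) (i : ℕ) : ATL K q 3 :=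
  ((-1 : K) ^ i * ((q + 1) * Ring.inverse q) ^ i) •
      (fgen q 3 0 * fgen q 3 2 * fgen q 3 1) ^ i +
    ((-1 : K) ^ i * (q + 1) ^ i) • (fgen q 3 0 * fgen q 3 1 * fgen q 3 2) ^ i +
    ((-1 : K) ^ (i - 1) * ((q + 1) * Ring.inverse q) ^ (i - 1)) •
      ((fgen q 3 0 * fgen q 3 2 * fgen q 3 1) ^ (i - 1) * (fgen q 3 0 * fgen q 3 2)) +
    ((-1 : K) ^ (i - 1) * (q + 1) ^ (i - 1)) •
      ((fgen q 3 0 * fgen q 3 1 * fgen q 3 2) ^ (i - 1) * (fgen q 3 0 * fgen q 3 1))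

end AffineTL


section Statement19Aux

namespace Statement19Aux

variable {K : Type*} [CommRing K] {q : K} {M : Type*} [Ring M] [Algebra K M]

lemma gtrip1 (a b : M)
    (hq : a * a = (q - 1) • a + algebraMap K M q)
    (hv : a * b * a + a * b + b * a + a + b + 1 = 0) :
    (a + 1) * ((b + 1) * (a + 1)) = q • (a + 1) := by
  have expand : (a + 1) * ((b + 1) * (a + 1)) =
      (a * b * a + a * b + b * a + a + b + 1) + (a * a + a) := by noncomm_ring
  rw [expand, hv, hq, zero_add]
  rw [Algebra.algebraMap_eq_smul_one]
  match_scalars <;> ring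

lemma gtrip2 (a b : M)
    (hq : b * b = (q - 1) • b + algebraMap K M q)
    (hbr : a * b * a = b * a * b)
    (hv : a * b * a + a * b + b * a + a + b + 1 = 0) :
    (b + 1) * ((a + 1) * (b + 1)) = q • (b + 1) := by
  have expand : (b + 1) * ((a + 1) * (b + 1)) =
      (b * a * b - a * b * a) + (a * b * a + a * b + b * a + a + b + 1) + (b * b + b) := by
    noncomm_ring
  rw [expand, ← hbr, sub_self, zero_add, hv, zero_add, hq]
  rw [Algebra.algebraMap_eq_smul_one]
  match_scalars <;> ring

lemma ftrip_of (a b : M)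
    (h : (a + 1) * ((b + 1) * (a + 1)) = q • (a + 1)) :
    (Ring.inverse (q + 1) • (a + 1)) *
        ((Ring.inverse (q + 1) • (b + 1)) * (Ring.inverse (q + 1) • (a + 1)))
      = (q * Ring.inverse ((1 + q) ^ 2)) • (Ring.inverse (q + 1) • (a + 1)) := by
  rw [smul_mul_smul_comm, smul_mul_smul_comm, h, smul_smul, smul_smul]
  congr 1
  rw [add_comm 1 q, ← Ring.inverse_pow]
  ring

lemma key (δ c d : K) (A B P Q : M) (X : ℕ → M)
    (hX : ∀ n : ℕ, X (n + 1) =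
      ((-c) ^ (n + 1)) • A ^ (n + 1) + ((-d) ^ (n + 1)) • B ^ (n + 1)
        + ((-c) ^ n) • (A ^ n * P) + ((-d) ^ n) • (B ^ n * Q))
    (hcd : c * d * δ ^ 2 = δ)
    (wPA : P * A = δ • A) (wQA : Q * A = δ • A) (wAQ : A * Q = δ • A)
    (wPB : P * B = δ • B) (wQB : Q * B = δ • B) (wBP : B * P = δ • B)
    (wAB : A * B = δ ^ 2 • P) (wBA : B * A = δ ^ 2 • Q)
    (wPP : P * P = δ • P) (wQQ : Q * Q = δ • Q)
    (wPQ : P * Q = δ • Q) (wQP : Q * P = δ • P) :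
    X 1 ^ 2 = (3 * δ) • X 1 + X 2 ∧
      ∀ n : ℕ, X 1 * X (n + 2) = (δ ^ 2) • X (n + 1) + (2 * δ) • X (n + 2) + X (n + 3) := by
  have hcd3 : c * d * δ ^ 3 = δ ^ 2 := by linear_combination δ * hcd
  have hPA : ∀ n : ℕ, P * A ^ (n + 1) = δ • A ^ (n + 1) := by
    intro n; rw [pow_succ', ← mul_assoc, wPA, smul_mul_assoc, ← pow_succ']
  have hQA : ∀ n : ℕ, Q * A ^ (n + 1) = δ • A ^ (n + 1) := by
    intro n; rw [pow_succ', ← mul_assoc, wQA, smul_mul_assoc, ← pow_succ']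
  have hPB : ∀ n : ℕ, P * B ^ (n + 1) = δ • B ^ (n + 1) := by
    intro n; rw [pow_succ', ← mul_assoc, wPB, smul_mul_assoc, ← pow_succ']
  have hQB : ∀ n : ℕ, Q * B ^ (n + 1) = δ • B ^ (n + 1) := by
    intro n; rw [pow_succ', ← mul_assoc, wQB, smul_mul_assoc, ← pow_succ']
  have hPAP : ∀ n : ℕ, P * (A ^ n * P) = δ • (A ^ n * P) := by
    intro n
    cases n with
    | zero => simpa using wPP
    | succ m => rw [← mul_assoc, hPA m, smul_mul_assoc]
  have hQAP : ∀ n : ℕ, Q * (A ^ n * P) = δ • (A ^ n * P) := by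
    intro n
    cases n with
    | zero => simpa using wQP
    | succ m => rw [← mul_assoc, hQA m, smul_mul_assoc]
  have hPBQ : ∀ n : ℕ, P * (B ^ n * Q) = δ • (B ^ n * Q) := by
    intro n
    cases n with
    | zero => simpa using wPQ
    | succ m => rw [← mul_assoc, hPB m, smul_mul_assoc]
  have hQBQ : ∀ n : ℕ, Q * (B ^ n * Q) = δ • (B ^ n * Q) := by
    intro n
    cases n with
    | zero => simpa using wQQ
    | succ m => rw [← mul_assoc, hQB m, smul_mul_assoc]
  have hAB1 : ∀ n : ℕ, A * B ^ (n + 1) = δ ^ 2 • (P * B ^ n) := by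
    intro n; rw [pow_succ', ← mul_assoc, wAB, smul_mul_assoc]
  have hBA1 : ∀ n : ℕ, B * A ^ (n + 1) = δ ^ 2 • (Q * A ^ n) := by
    intro n; rw [pow_succ', ← mul_assoc, wBA, smul_mul_assoc]
  have hAB : ∀ n : ℕ, A * B ^ (n + 2) = (δ ^ 3) • B ^ (n + 1) := by
    intro n; rw [hAB1 (n + 1), hPB n, smul_smul]
    congr 1; ring
  have hBA : ∀ n : ℕ, B * A ^ (n + 2) = (δ ^ 3) • A ^ (n + 1) := by
    intro n; rw [hBA1 (n + 1), hQA n, smul_smul]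
    congr 1; ring
  have hABQ : ∀ n : ℕ, A * (B ^ (n + 1) * Q) = (δ ^ 3) • (B ^ n * Q) := by
    intro n; rw [← mul_assoc, hAB1 n, smul_mul_assoc, mul_assoc, hPBQ n, smul_smul]
    congr 1; ring
  have hBAP : ∀ n : ℕ, B * (A ^ (n + 1) * P) = (δ ^ 3) • (A ^ n * P) := by
    intro n; rw [← mul_assoc, hBA1 n, smul_mul_assoc, mul_assoc, hQAP n, smul_smul]
    congr 1; ring
  have hAAP : ∀ n : ℕ, A * (A ^ (n + 1) * P) = A ^ (n + 2) * P := by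
    intro n; rw [← mul_assoc, ← pow_succ']
  have hBBQ : ∀ n : ℕ, B * (B ^ (n + 1) * Q) = B ^ (n + 2) * Q := by
    intro n; rw [← mul_assoc, ← pow_succ']
  have h1 : X 1 = (-c) • A + (-d) • B + P + Q := by
    have := hX 0
    norm_num at this
    simpa using this
  constructor
  · have h2 : X 2 = ((-c) ^ 2) • A ^ 2 + ((-d) ^ 2) • B ^ 2
        + (-c) • (A * P) + (-d) • (B * Q) := by
      have := hX 1
      norm_num at this
      simpa [pow_one] using this
    rw [pow_two, h1, h2]
    simp only [add_mul, mul_add, smul_mul_assoc, mul_smul_comm, smul_smul, smul_add,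
      wPA, wQA, wAQ, wPB, wQB, wBP, wAB, wBA, wPP, wQQ, wPQ, wQP, pow_two]
    match_scalars <;> first | ring1 | linear_combination hcd | linear_combination -hcd
  · intro n
    have e2 : X (n + 2) = ((-c) ^ (n + 2)) • A ^ (n + 2) + ((-d) ^ (n + 2)) • B ^ (n + 2)
        + ((-c) ^ (n + 1)) • (A ^ (n + 1) * P) + ((-d) ^ (n + 1)) • (B ^ (n + 1) * Q) :=
      hX (n + 1)
    have e3 : X (n + 1) = ((-c) ^ (n + 1)) • A ^ (n + 1) + ((-d) ^ (n + 1)) • B ^ (n + 1)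
        + ((-c) ^ n) • (A ^ n * P) + ((-d) ^ n) • (B ^ n * Q) := hX n
    have e4 : X (n + 3) = ((-c) ^ (n + 3)) • A ^ (n + 3) + ((-d) ^ (n + 3)) • B ^ (n + 3)
        + ((-c) ^ (n + 2)) • (A ^ (n + 2) * P) + ((-d) ^ (n + 2)) • (B ^ (n + 2) * Q) :=
      hX (n + 2)
    have eAA : A * A ^ (n + 2) = A ^ (n + 3) := by rw [← pow_succ']
    have eBB : B * B ^ (n + 2) = B ^ (n + 3) := by rw [← pow_succ']
    rw [h1, e2, e3, e4]
    simp only [add_mul, mul_add, smul_mul_assoc, mul_smul_comm, smul_smul, smul_add,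
      eAA, eBB, hAB n, hBA n, hAAP n, hBBQ n, hABQ n, hBAP n,
      hPA (n + 1), hQA (n + 1), hPB (n + 1), hQB (n + 1),
      hPAP (n + 1), hQAP (n + 1), hPBQ (n + 1), hQBQ (n + 1)]
    match_scalars <;>
      first
        | ring1
        | linear_combination ((-d) ^ (n + 1)) * hcd3
        | linear_combination ((-d) ^ n) * hcd3
        | linear_combination ((-c) ^ (n + 1)) * hcd3
        | linear_combination ((-c) ^ n) * hcd3

end Statement19Aux

end Statement19Aux


namespace AffineTL

open FreeAlgebra

variable {K : Type*} [CommRing K] {q : K}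

lemma st19_gquad (i : Fin 3) :
    g q 3 i * g q 3 i = (q - 1) • g q 3 i + algebraMap K _ q := by
  have h := RingQuot.mkAlgHom_rel K (ATLRel.quad (q := q) (by norm_num) i)
  simpa [g, map_mul, map_add, map_smul] using h

lemma st19_gbraid (i : Fin 3) :
    g q 3 i * g q 3 (csucc i) * g q 3 i = g q 3 (csucc i) * g q 3 i * g q 3 (csucc i) := by
  have h := RingQuot.mkAlgHom_rel K (ATLRel.braid (q := q) (by norm_num) i)
  simpa [g, map_mul] using h

lemma st19_gvrel (i : Fin 3) :
    g q 3 i * g q 3 (csucc i) * g q 3 i + g q 3 i * g q 3 (csucc i) + g q 3 (csucc i) * g q 3 i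
      + g q 3 i + g q 3 (csucc i) + 1 = 0 := by
  have h := RingQuot.mkAlgHom_rel K (ATLRel.vrel (q := q) (by norm_num) i)
  simpa [g, map_mul, map_add] using h

lemma st19_ftripA (i : Fin 3) :
    fgen q 3 i * (fgen q 3 (csucc i) * fgen q 3 i)
      = (q * Ring.inverse ((1 + q) ^ 2)) • fgen q 3 i := by
  unfold fgen
  exact Statement19Aux.ftrip_of _ _ (Statement19Aux.gtrip1 _ _ (st19_gquad i) (st19_gvrel i))

lemma st19_ftripB (i : Fin 3) :
    fgen q 3 (csucc i) * (fgen q 3 i * fgen q 3 (csucc i))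
      = (q * Ring.inverse ((1 + q) ^ 2)) • fgen q 3 (csucc i) := by
  unfold fgen
  exact Statement19Aux.ftrip_of _ _
    (Statement19Aux.gtrip2 _ _ (st19_gquad (csucc i)) (st19_gbraid i) (st19_gvrel i))

end AffineTL


open AffineTL in
/-- the recursion satisfied by the elements `x_i` of `TLhat_3(q)`,
where `δ = q/(1+q)²`. -/
theorem statement19 {K : Type*} [CommRing K] [IsDomain K] [CharZero K]
    (q sq : K) (hsq : sq * sq = q) (hq : IsUnit q) (hq1 : IsUnit (q + 1))
    (F : ATL K q 2 →ₐ[K] ATL K q 3)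
    (hF1 : F (g q 2 0) = g q 3 0)
    (hF2 : F (g q 2 1) = g q 3 1 * g q 3 2 * qinv q (g q 3 1)) :
    xElt q 1 = fgen q 3 0 * F (fgen q 2 1) ∧
    (xElt q 1) ^ 2 = (3 * (q * Ring.inverse ((1 + q) ^ 2))) • xElt q 1 + xElt q 2 ∧
    (∀ i : ℕ, 2 ≤ i →
      xElt q 1 * xElt q i =
        ((q * Ring.inverse ((1 + q) ^ 2)) ^ 2) • xElt q (i - 1) +
          (2 * (q * Ring.inverse ((1 + q) ^ 2))) • xElt q i + xElt q (i + 1)) ∧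
    (∀ j : ℕ, 1 ≤ j → xElt q 1 * xElt q j = xElt q j * xElt q 1) := by
  classical
  -- scalar facts
  have hiq : q * Ring.inverse q = 1 := Ring.mul_inverse_cancel q hq
  have hiq1 : (q + 1) * Ring.inverse (q + 1) = 1 := Ring.mul_inverse_cancel _ hq1
  have hd2 : (1 + q) ^ 2 * Ring.inverse ((1 + q) ^ 2) = 1 :=
    Ring.mul_inverse_cancel _ (by simpa [add_comm] using hq1.pow 2)
  have hcd : ((q + 1) * Ring.inverse q) * (q + 1) * (q * Ring.inverse ((1 + q) ^ 2)) ^ 2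
      = q * Ring.inverse ((1 + q) ^ 2) := by
    linear_combination (q * Ring.inverse ((1 + q) ^ 2) * (q * Ring.inverse q)) * hd2
      + (q * Ring.inverse ((1 + q) ^ 2)) * hiq
  -- triple relations among the idempotents
  have t01 : fgen q 3 0 * (fgen q 3 1 * fgen q 3 0)
      = (q * Ring.inverse ((1 + q) ^ 2)) • fgen q 3 0 := by
    have h := st19_ftripA (q := q) 0
    rwa [show (csucc 0 : Fin 3) = 1 from rfl] at h
  have t12 : fgen q 3 1 * (fgen q 3 2 * fgen q 3 1)
      = (q * Ring.inverse ((1 + q) ^ 2)) • fgen q 3 1 := by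
    have h := st19_ftripA (q := q) 1
    rwa [show (csucc 1 : Fin 3) = 2 from rfl] at h
  have t20 : fgen q 3 2 * (fgen q 3 0 * fgen q 3 2)
      = (q * Ring.inverse ((1 + q) ^ 2)) • fgen q 3 2 := by
    have h := st19_ftripA (q := q) 2
    rwa [show (csucc 2 : Fin 3) = 0 from rfl] at h
  have t10 : fgen q 3 1 * (fgen q 3 0 * fgen q 3 1)
      = (q * Ring.inverse ((1 + q) ^ 2)) • fgen q 3 1 := by
    have h := st19_ftripB (q := q) 0
    rwa [show (csucc 0 : Fin 3) = 1 from rfl] at h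
  have t21 : fgen q 3 2 * (fgen q 3 1 * fgen q 3 2)
      = (q * Ring.inverse ((1 + q) ^ 2)) • fgen q 3 2 := by
    have h := st19_ftripB (q := q) 1
    rwa [show (csucc 1 : Fin 3) = 2 from rfl] at h
  have t02 : fgen q 3 0 * (fgen q 3 2 * fgen q 3 0)
      = (q * Ring.inverse ((1 + q) ^ 2)) • fgen q 3 0 := by
    have h := st19_ftripB (q := q) 2
    rwa [show (csucc 2 : Fin 3) = 0 from rfl] at h
  have ctx : ∀ a b : ATL K q 3, a * (b * a) = (q * Ring.inverse ((1 + q) ^ 2)) • a →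
      ∀ x : ATL K q 3, a * (b * (a * x)) = (q * Ring.inverse ((1 + q) ^ 2)) • (a * x) := by
    intro a b h x
    calc a * (b * (a * x)) = (a * (b * a)) * x := by rw [mul_assoc, mul_assoc]
    _ = (q * Ring.inverse ((1 + q) ^ 2)) • (a * x) := by rw [h, smul_mul_assoc]
  -- the twelve word relations
  have wPA : (fgen q 3 0 * fgen q 3 2) * (fgen q 3 0 * fgen q 3 2 * fgen q 3 1)
      = (q * Ring.inverse ((1 + q) ^ 2)) • (fgen q 3 0 * fgen q 3 2 * fgen q 3 1) := by
    simp only [mul_assoc]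
    rw [ctx _ _ t20 (fgen q 3 1), mul_smul_comm]
  have wQA : (fgen q 3 0 * fgen q 3 1) * (fgen q 3 0 * fgen q 3 2 * fgen q 3 1)
      = (q * Ring.inverse ((1 + q) ^ 2)) • (fgen q 3 0 * fgen q 3 2 * fgen q 3 1) := by
    simp only [mul_assoc]
    exact ctx _ _ t01 (fgen q 3 2 * fgen q 3 1)
  have wAQ : (fgen q 3 0 * fgen q 3 2 * fgen q 3 1) * (fgen q 3 0 * fgen q 3 1)
      = (q * Ring.inverse ((1 + q) ^ 2)) • (fgen q 3 0 * fgen q 3 2 * fgen q 3 1) := by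
    simp only [mul_assoc]
    rw [t10, mul_smul_comm, mul_smul_comm]
  have wPB : (fgen q 3 0 * fgen q 3 2) * (fgen q 3 0 * fgen q 3 1 * fgen q 3 2)
      = (q * Ring.inverse ((1 + q) ^ 2)) • (fgen q 3 0 * fgen q 3 1 * fgen q 3 2) := by
    simp only [mul_assoc]
    exact ctx _ _ t02 (fgen q 3 1 * fgen q 3 2)
  have wQB : (fgen q 3 0 * fgen q 3 1) * (fgen q 3 0 * fgen q 3 1 * fgen q 3 2)
      = (q * Ring.inverse ((1 + q) ^ 2)) • (fgen q 3 0 * fgen q 3 1 * fgen q 3 2) := by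
    simp only [mul_assoc]
    exact ctx _ _ t01 (fgen q 3 1 * fgen q 3 2)
  have wBP : (fgen q 3 0 * fgen q 3 1 * fgen q 3 2) * (fgen q 3 0 * fgen q 3 2)
      = (q * Ring.inverse ((1 + q) ^ 2)) • (fgen q 3 0 * fgen q 3 1 * fgen q 3 2) := by
    simp only [mul_assoc]
    rw [t20, mul_smul_comm, mul_smul_comm]
  have wAB : (fgen q 3 0 * fgen q 3 2 * fgen q 3 1) * (fgen q 3 0 * fgen q 3 1 * fgen q 3 2)
      = ((q * Ring.inverse ((1 + q) ^ 2)) ^ 2) • (fgen q 3 0 * fgen q 3 2) := by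
    simp only [mul_assoc]
    rw [ctx _ _ t10 (fgen q 3 2)]
    simp only [mul_smul_comm]
    rw [t21]
    simp only [mul_smul_comm, smul_smul, pow_two]
  have wBA : (fgen q 3 0 * fgen q 3 1 * fgen q 3 2) * (fgen q 3 0 * fgen q 3 2 * fgen q 3 1)
      = ((q * Ring.inverse ((1 + q) ^ 2)) ^ 2) • (fgen q 3 0 * fgen q 3 1) := by
    simp only [mul_assoc]
    rw [ctx _ _ t20 (fgen q 3 1)]
    simp only [mul_smul_comm]
    rw [t12]
    simp only [mul_smul_comm, smul_smul, pow_two]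
  have wPP : (fgen q 3 0 * fgen q 3 2) * (fgen q 3 0 * fgen q 3 2)
      = (q * Ring.inverse ((1 + q) ^ 2)) • (fgen q 3 0 * fgen q 3 2) := by
    simp only [mul_assoc]
    exact ctx _ _ t02 (fgen q 3 2)
  have wQQ : (fgen q 3 0 * fgen q 3 1) * (fgen q 3 0 * fgen q 3 1)
      = (q * Ring.inverse ((1 + q) ^ 2)) • (fgen q 3 0 * fgen q 3 1) := by
    simp only [mul_assoc]
    exact ctx _ _ t01 (fgen q 3 1)
  have wPQ : (fgen q 3 0 * fgen q 3 2) * (fgen q 3 0 * fgen q 3 1)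
      = (q * Ring.inverse ((1 + q) ^ 2)) • (fgen q 3 0 * fgen q 3 1) := by
    simp only [mul_assoc]
    exact ctx _ _ t02 (fgen q 3 1)
  have wQP : (fgen q 3 0 * fgen q 3 1) * (fgen q 3 0 * fgen q 3 2)
      = (q * Ring.inverse ((1 + q) ^ 2)) • (fgen q 3 0 * fgen q 3 2) := by
    simp only [mul_assoc]
    exact ctx _ _ t01 (fgen q 3 2)
  -- xElt in the canonical form
  have hX : ∀ n : ℕ, xElt q (n + 1) =
      ((-((q + 1) * Ring.inverse q)) ^ (n + 1)) • (fgen q 3 0 * fgen q 3 2 * fgen q 3 1) ^ (n + 1)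
      + ((-(q + 1)) ^ (n + 1)) • (fgen q 3 0 * fgen q 3 1 * fgen q 3 2) ^ (n + 1)
      + ((-((q + 1) * Ring.inverse q)) ^ n) •
          ((fgen q 3 0 * fgen q 3 2 * fgen q 3 1) ^ n * (fgen q 3 0 * fgen q 3 2))
      + ((-(q + 1)) ^ n) •
          ((fgen q 3 0 * fgen q 3 1 * fgen q 3 2) ^ n * (fgen q 3 0 * fgen q 3 1)) := by
    intro n
    simp only [xElt, Nat.add_sub_cancel, ← mul_pow, neg_one_mul]
  obtain ⟨hsq2, hrec⟩ := Statement19Aux.key (q * Ring.inverse ((1 + q) ^ 2))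
    ((q + 1) * Ring.inverse q) (q + 1)
    (fgen q 3 0 * fgen q 3 2 * fgen q 3 1) (fgen q 3 0 * fgen q 3 1 * fgen q 3 2)
    (fgen q 3 0 * fgen q 3 2) (fgen q 3 0 * fgen q 3 1) (xElt q)
    hX hcd wPA wQA wAQ wPB wQB wBP wAB wBA wPP wQQ wPQ wQP
  -- part 1
  have hv1 : g q 3 1 * g q 3 2 * g q 3 1 + g q 3 1 * g q 3 2 + g q 3 2 * g q 3 1
      + g q 3 1 + g q 3 2 + 1 = 0 := by
    have h := st19_gvrel (q := q) 1
    rwa [show (csucc 1 : Fin 3) = 2 from rfl] at h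
  have hFf : F (fgen q 2 1)
      = Ring.inverse (q + 1) • (g q 3 1 * g q 3 2 * qinv q (g q 3 1) + 1) := by
    rw [fgen, map_smul, map_add, map_one, hF2]
  have hinner : Ring.inverse (q + 1) • (g q 3 1 * g q 3 2 * qinv q (g q 3 1) + 1)
      = (-((q + 1) * Ring.inverse q)) • (fgen q 3 2 * fgen q 3 1)
        + (-(q + 1)) • (fgen q 3 1 * fgen q 3 2) + fgen q 3 2 + fgen q 3 1 := by
    rw [← sub_eq_zero]
    have key1 : Ring.inverse (q + 1) • (g q 3 1 * g q 3 2 * qinv q (g q 3 1) + 1)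
        - ((-((q + 1) * Ring.inverse q)) • (fgen q 3 2 * fgen q 3 1)
          + (-(q + 1)) • (fgen q 3 1 * fgen q 3 2) + fgen q 3 2 + fgen q 3 1)
        = (Ring.inverse (q + 1) * Ring.inverse q) •
            (g q 3 1 * g q 3 2 * g q 3 1 + g q 3 1 * g q 3 2 + g q 3 2 * g q 3 1
              + g q 3 1 + g q 3 2 + 1) := by
      rw [fgen, fgen, qinv, Algebra.algebraMap_eq_smul_one]
      simp only [mul_add, add_mul, mul_sub, sub_mul, mul_smul_comm, smul_mul_assoc,
        smul_smul, smul_add, smul_sub, mul_one, one_mul, mul_assoc]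
      match_scalars <;>
        first
          | ring1
          | linear_combination (Ring.inverse q * Ring.inverse (q + 1)) * hiq1
          | linear_combination (-(Ring.inverse q * Ring.inverse (q + 1))) * hiq1
          | linear_combination (Ring.inverse q * Ring.inverse (q + 1) + Ring.inverse (q + 1)) * hiq1
          | linear_combination (-(Ring.inverse q * Ring.inverse (q + 1)) - Ring.inverse (q + 1)) * hiq1
          | linear_combination Ring.inverse (q + 1) * hiq1
          | linear_combination (-(Ring.inverse (q + 1))) * hiq1
          | linear_combination (-(Ring.inverse (q + 1))) * hiq + Ring.inverse (q + 1) * hiq1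
          | linear_combination Ring.inverse (q + 1) * hiq + (-(Ring.inverse (q + 1))) * hiq1
          | linear_combination (Ring.inverse (q + 1) + Ring.inverse q * Ring.inverse (q + 1)) * hiq1 + (-(Ring.inverse (q + 1))) * hiq
          | linear_combination Ring.inverse (q + 1) * hiq
          | linear_combination (-(Ring.inverse (q + 1))) * hiq
    rw [key1, hv1, smul_zero]
  have part1 : xElt q 1 = fgen q 3 0 * F (fgen q 2 1) := by
    rw [hFf, hinner]
    simp only [xElt, pow_one, pow_zero, one_mul, one_smul, Nat.sub_self, mul_add,
      mul_smul_comm, mul_assoc]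
    match_scalars <;>
      first
        | ring1
        | linear_combination (Ring.inverse q * Ring.inverse (q + 1)) * hiq1
        | linear_combination (-(Ring.inverse q * Ring.inverse (q + 1))) * hiq1
        | linear_combination (Ring.inverse q * Ring.inverse (q + 1) + Ring.inverse (q + 1)) * hiq1
        | linear_combination (-(Ring.inverse q * Ring.inverse (q + 1)) - Ring.inverse (q + 1)) * hiq1
        | linear_combination Ring.inverse (q + 1) * hiq1
        | linear_combination (-(Ring.inverse (q + 1))) * hiq1
        | linear_combination (-(Ring.inverse (q + 1))) * hiq + Ring.inverse (q + 1) * hiq1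
        | linear_combination Ring.inverse (q + 1) * hiq + (-(Ring.inverse (q + 1))) * hiq1
        | linear_combination (Ring.inverse (q + 1) + Ring.inverse q * Ring.inverse (q + 1)) * hiq1 + (-(Ring.inverse (q + 1))) * hiq
        | linear_combination Ring.inverse (q + 1) * hiq
        | linear_combination (-(Ring.inverse (q + 1))) * hiq
  refine ⟨part1, hsq2, ?_, ?_⟩
  · intro i hi
    obtain ⟨n, rfl⟩ := Nat.exists_eq_add_of_le' hi
    exact hrec n
  · -- commutation
    have hx2 : xElt q 2 = xElt q 1 ^ 2 - (3 * (q * Ring.inverse ((1 + q) ^ 2))) • xElt q 1 := by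
      rw [hsq2]; abel
    have hcomm2 : xElt q 1 * xElt q 2 = xElt q 2 * xElt q 1 := by
      rw [hx2, mul_sub, sub_mul, mul_smul_comm, smul_mul_assoc, ← pow_succ, ← pow_succ']
    have H : ∀ n : ℕ, xElt q 1 * xElt q (n + 1) = xElt q (n + 1) * xElt q 1 ∧
        xElt q 1 * xElt q (n + 2) = xElt q (n + 2) * xElt q 1 := by
      intro n
      induction n with
      | zero => exact ⟨rfl, hcomm2⟩
      | succ m ih =>
        refine ⟨ih.2, ?_⟩
        show xElt q 1 * xElt q (m + 3) = xElt q (m + 3) * xElt q 1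
        have h3 : xElt q (m + 3) = xElt q 1 * xElt q (m + 2)
            - ((q * Ring.inverse ((1 + q) ^ 2)) ^ 2) • xElt q (m + 1)
            - (2 * (q * Ring.inverse ((1 + q) ^ 2))) • xElt q (m + 2) := by
          rw [hrec m]; abel
        rw [h3]
        simp only [mul_sub, sub_mul, mul_smul_comm, smul_mul_assoc]
        rw [mul_assoc, ← ih.2, ← ih.1]
    intro j hj
    obtain ⟨n, rfl⟩ := Nat.exists_eq_add_of_le' hj
    exact (H n).1
end
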